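/- The greatest clearing wealth map x ↦ V(x) is nondecreasing on ℝⁿ₊: if x ≤ y componentwise then V(x) ≤ V(y) componentwise. Consequently the payment map x ↦ p(x) = p̄ − V(x)⁻ and the equity map x ↦ E(x) = V(x)⁺ are nondecreasing. -/
import Mathlib


open Matrix BigOperators

noncomputable section

/-- Total liabilities `p̄_i = Σ_{j=1}^{n+1} L_{ij}`. -/
def pbar {n : ℕ} (L : Matrix (Fin n) (Fin (n + 1)) ℝ) (i : Fin n) : ℝ :=
  ∑ j, L i j

/-- Relative liabilities `π_{ij} = L_{ij} / p̄_i` if `p̄_i > 0`, else `0`. -/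
def relLiab {n : ℕ} (L : Matrix (Fin n) (Fin (n + 1)) ℝ) (i j : Fin n) : ℝ :=
  if 0 < pbar L i then L i j.castSucc / pbar L i else 0

/-- The clearing map in wealths `Ψ_x`. -/
def Psi {n : ℕ} (L : Matrix (Fin n) (Fin (n + 1)) ℝ) (αx αL : ℝ)
    (x V : Fin n → ℝ) (i : Fin n) : ℝ :=
  if 0 ≤ V i then
    x i + ∑ j, relLiab L j i * max (pbar L j - max (-(V j)) 0) 0 - pbar L i
  else
    αx * x i + αL * ∑ j, relLiab L j i * max (pbar L j - max (-(V j)) 0) 0 - pbar L i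

lemma relLiab_nonneg {n : ℕ} (L : Matrix (Fin n) (Fin (n + 1)) ℝ)
    (hL : ∀ i j, 0 ≤ L i j) (i j : Fin n) : 0 ≤ relLiab L i j := by
  unfold relLiab
  split_ifs with h
  · exact div_nonneg (hL i j.castSucc) h.le
  · exact le_rfl

lemma pbar_nonneg {n : ℕ} (L : Matrix (Fin n) (Fin (n + 1)) ℝ)
    (hL : ∀ i j, 0 ≤ L i j) (i : Fin n) : 0 ≤ pbar L i :=
  Finset.sum_nonneg fun j _ => hL i j

lemma flow_nonneg {n : ℕ} (L : Matrix (Fin n) (Fin (n + 1)) ℝ)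
    (hL : ∀ i j, 0 ≤ L i j) (V : Fin n → ℝ) (i : Fin n) :
    0 ≤ ∑ j, relLiab L j i * max (pbar L j - max (-(V j)) 0) 0 :=
  Finset.sum_nonneg fun j _ =>
    mul_nonneg (relLiab_nonneg L hL j i) (le_max_right _ _)

lemma flow_mono {n : ℕ} (L : Matrix (Fin n) (Fin (n + 1)) ℝ)
    (hL : ∀ i j, 0 ≤ L i j) {V V' : Fin n → ℝ} (h : V ≤ V') (i : Fin n) :
    ∑ j, relLiab L j i * max (pbar L j - max (-(V j)) 0) 0
      ≤ ∑ j, relLiab L j i * max (pbar L j - max (-(V' j)) 0) 0 := by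
  refine Finset.sum_le_sum fun j _ => mul_le_mul_of_nonneg_left ?_ (relLiab_nonneg L hL j i)
  have hj := h j
  have : max (-(V' j)) 0 ≤ max (-(V j)) 0 := max_le_max (by linarith) le_rfl
  exact max_le_max (by linarith) le_rfl

lemma flow_le {n : ℕ} (L : Matrix (Fin n) (Fin (n + 1)) ℝ)
    (hL : ∀ i j, 0 ≤ L i j) (V : Fin n → ℝ) (i : Fin n) :
    ∑ j, relLiab L j i * max (pbar L j - max (-(V j)) 0) 0
      ≤ ∑ j, relLiab L j i * pbar L j := by
  refine Finset.sum_le_sum fun j _ => mul_le_mul_of_nonneg_left ?_ (relLiab_nonneg L hL j i)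
  have hp := pbar_nonneg L hL j
  have h0 : (0:ℝ) ≤ max (-(V j)) 0 := le_max_right _ _
  rw [max_le_iff]; constructor <;> linarith

lemma psi_mono_V {n : ℕ} (L : Matrix (Fin n) (Fin (n + 1)) ℝ)
    (hL : ∀ i j, 0 ≤ L i j) (αx αL : ℝ)
    (hαx : αx ∈ Set.Icc (0 : ℝ) 1) (hαL : αL ∈ Set.Icc (0 : ℝ) 1)
    (z : Fin n → ℝ) (hz : ∀ i, 0 ≤ z i) {V V' : Fin n → ℝ} (h : V ≤ V') :
    Psi L αx αL z V ≤ Psi L αx αL z V' := by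
  intro i
  have hF : ∑ j, relLiab L j i * max (pbar L j - max (-(V j)) 0) 0
      ≤ ∑ j, relLiab L j i * max (pbar L j - max (-(V' j)) 0) 0 := flow_mono L hL h i
  have hF0 := flow_nonneg L hL V i
  have hz1 : αx * z i ≤ z i := by nlinarith [hz i, hαx.2, hαx.1]
  have hFa : αL * ∑ j, relLiab L j i * max (pbar L j - max (-(V j)) 0) 0
      ≤ ∑ j, relLiab L j i * max (pbar L j - max (-(V j)) 0) 0 := by
    nlinarith [hαL.2, hαL.1]
  unfold Psi
  split_ifs with h1 h2 h2
  · linarith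
  · exact absurd ((h1.trans (h i))) h2
  · linarith
  · have : αL * ∑ j, relLiab L j i * max (pbar L j - max (-(V j)) 0) 0
        ≤ αL * ∑ j, relLiab L j i * max (pbar L j - max (-(V' j)) 0) 0 :=
      mul_le_mul_of_nonneg_left hF hαL.1
    linarith

lemma psi_le_bound {n : ℕ} (L : Matrix (Fin n) (Fin (n + 1)) ℝ)
    (hL : ∀ i j, 0 ≤ L i j) (αx αL : ℝ)
    (hαx : αx ∈ Set.Icc (0 : ℝ) 1) (hαL : αL ∈ Set.Icc (0 : ℝ) 1)
    (z : Fin n → ℝ) (hz : ∀ i, 0 ≤ z i) (V : Fin n → ℝ) (i : Fin n) :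
    Psi L αx αL z V i ≤ z i + ∑ j, relLiab L j i * pbar L j := by
  have hF := flow_le L hL V i
  have hF0 := flow_nonneg L hL V i
  have hp := pbar_nonneg L hL i
  have hz1 : αx * z i ≤ z i := by nlinarith [hz i, hαx.2, hαx.1]
  have hFa : αL * ∑ j, relLiab L j i * max (pbar L j - max (-(V j)) 0) 0
      ≤ ∑ j, relLiab L j i * max (pbar L j - max (-(V j)) 0) 0 := by
    nlinarith [hαL.2, hαL.1]
  unfold Psi
  split_ifs with h1 <;> linarith

/-- The greatest clearing wealth map `x ↦ V(x)` is nondecreasing on `ℝⁿ₊`: if `x ≤ y`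
componentwise then `V(x) ≤ V(y)` componentwise.  Consequently the payment map
`x ↦ p(x) = p̄ − V(x)⁻` and the equity map `x ↦ E(x) = V(x)⁺` are nondecreasing. -/
theorem clearing_wealth_monotone (n : ℕ) (hn : 1 ≤ n)
    (L : Matrix (Fin n) (Fin (n + 1)) ℝ)
    (hL : ∀ i j, 0 ≤ L i j) (hLdiag : ∀ i : Fin n, L i i.castSucc = 0)
    (αx αL : ℝ) (hαx : αx ∈ Set.Icc (0 : ℝ) 1) (hαL : αL ∈ Set.Icc (0 : ℝ) 1)
    (x y : Fin n → ℝ) (hx : ∀ i, 0 ≤ x i) (hy : ∀ i, 0 ≤ y i) (hxy : x ≤ y)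
    (Vx Vy : Fin n → ℝ)
    (hVx : IsGreatest {V | Psi L αx αL x V = V} Vx)
    (hVy : IsGreatest {V | Psi L αx αL y V = V} Vy) :
    Vx ≤ Vy
    ∧ (∀ i, pbar L i - max (-(Vx i)) 0 ≤ pbar L i - max (-(Vy i)) 0)
    ∧ (∀ i, max (Vx i) 0 ≤ max (Vy i) 0) := by
  -- set of post-fixed points of Psi with endowment y
  set P : Set (Fin n → ℝ) := {V | V ≤ Psi L αx αL y V} with hP
  have hVyP : Vy ∈ P := le_of_eq hVy.1.symm
  -- Vx is a post-fixed point of Psi_y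
  have hVxP : Vx ∈ P := by
    intro i
    have hfix : Psi L αx αL x Vx i = Vx i := congrFun hVx.1 i
    rw [← hfix]
    unfold Psi
    split_ifs with h1
    · have := hxy i; simp only [ge_iff_le]; linarith
    · have := mul_le_mul_of_nonneg_left (hxy i) hαx.1; linarith
  -- every element of P is bounded above coordinatewise
  have hub : ∀ V ∈ P, ∀ i, V i ≤ y i + ∑ j, relLiab L j i * pbar L j := by
    intro V hV i
    exact (hV i).trans (psi_le_bound L hL αx αL hαx hαL y hy V i)
  have hbdd : ∀ i, BddAbove ((fun V => V i) '' P) := by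
    intro i
    exact ⟨y i + ∑ j, relLiab L j i * pbar L j, by
      rintro _ ⟨V, hV, rfl⟩; exact hub V hV i⟩
  have hne : ∀ i, ((fun V => V i) '' P).Nonempty := fun i => ⟨Vy i, Vy, hVyP, rfl⟩
  set W : Fin n → ℝ := fun i => sSup ((fun V => V i) '' P) with hW
  have hleW : ∀ V ∈ P, V ≤ W := fun V hV i => le_csSup (hbdd i) ⟨V, hV, rfl⟩
  have hWpost : W ≤ Psi L αx αL y W := by
    intro i
    refine csSup_le (hne i) ?_
    rintro _ ⟨V, hV, rfl⟩
    exact (hV i).trans (psi_mono_V L hL αx αL hαx hαL y hy (hleW V hV) i)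
  have hWP : Psi L αx αL y W ∈ P :=
    psi_mono_V L hL αx αL hαx hαL y hy hWpost
  have hWfix : Psi L αx αL y W = W :=
    le_antisymm (hleW _ hWP) hWpost
  have hWVy : W ≤ Vy := hVy.2 hWfix
  have hmain : Vx ≤ Vy := (hleW Vx hVxP).trans hWVy
  refine ⟨hmain, fun i => ?_, fun i => max_le_max (hmain i) le_rfl⟩
  have hi := hmain i
  have : max (-(Vy i)) 0 ≤ max (-(Vx i)) 0 := max_le_max (by linarith) le_rfl
  linarith
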